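/- arXiv:2007.04074 — 3 statements merged into one kernel-verified Lean document; each statement's English description precedes it below -/
import Mathlib

section
/- Let f : 2^V → ℝ be a monotone submodular function with f(∅) = 0 on a finite ground set V, and let k ≥ 1. Let G_k be the set produced by the greedy algorithm that starts from ∅ and for k steps adds an element maximizing the marginal gain. Then f(G_k) ≥ (1 - (1 - 1/k)^k) · max_{S ⊆ V, |S| = k} f(S) ≥ (1 - 1/e) · max_{S ⊆ V, |S| = k} f(S). -/
lemma greedy_telescope {V : Type*} [DecidableEq V] (f : Finset V → ℝ)
    (hsub : ∀ A B : Finset V, A ⊆ B → ∀ e ∉ B,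
      f (insert e A) - f A ≥ f (insert e B) - f B)
    (A T : Finset V) :
    f (A ∪ T) - f A ≤ ∑ e ∈ T, (f (insert e A) - f A) := by
  induction T using Finset.induction with
  | empty => simp
  | @insert e T he ih =>
    rw [Finset.sum_insert he]
    by_cases hA : e ∈ A
    · have h2 : A ∪ insert e T = A ∪ T := by rw [Finset.union_insert, Finset.insert_eq_self.2 (Finset.mem_union_left T hA)]
      have h1 : f (insert e A) - f A = 0 := by rw [Finset.insert_eq_self.2 hA]; ring
      rw [h2, h1]; linarith
    · have heAT : e ∉ A ∪ T := by simp [hA, he]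
      have h1 := hsub A (A ∪ T) Finset.subset_union_left e heAT
      have h2 : A ∪ insert e T = insert e (A ∪ T) := Finset.union_insert e A T
      rw [h2]; linarith

/-- Greedy guarantee for monotone submodular maximization: the greedy set after `k` steps
satisfies `f(G_k) ≥ (1 - (1 - 1/k)^k) · OPT_k ≥ (1 - 1/e) · OPT_k`. -/
theorem greedy_guarantee {V : Type*} [Fintype V] [DecidableEq V]
    (f : Finset V → ℝ) (k : ℕ) (hk : 1 ≤ k) (hcard : k ≤ Fintype.card V)
    (hmono : ∀ A B : Finset V, A ⊆ B → f A ≤ f B)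
    (hsub : ∀ A B : Finset V, A ⊆ B → ∀ e ∉ B,
      f (insert e A) - f A ≥ f (insert e B) - f B)
    (h0 : f ∅ = 0)
    (G : ℕ → Finset V) (hG0 : G 0 = ∅)
    (hstep : ∀ i < k, ∃ e ∉ G i, G (i + 1) = insert e (G i) ∧
      ∀ e' ∉ G i, f (insert e' (G i)) - f (G i) ≤ f (insert e (G i)) - f (G i))
    (OPT : ℝ)
    (hOPT : IsGreatest {x : ℝ | ∃ S : Finset V, S.card = k ∧ f S = x} OPT) :
    f (G k) ≥ (1 - (1 - 1 / (k : ℝ)) ^ k) * OPT ∧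
      (1 - (1 - 1 / (k : ℝ)) ^ k) * OPT ≥ (1 - 1 / Real.exp 1) * OPT := by
  obtain ⟨S, hScard, hfS⟩ := hOPT.1
  have hkR : (0 : ℝ) < (k : ℝ) := by exact_mod_cast hk
  have hOPTnn : 0 ≤ OPT := by
    rw [← hfS, ← h0]; exact hmono _ _ (Finset.empty_subset S)
  have hq0 : (0:ℝ) ≤ 1 - 1 / (k:ℝ) := by
    rw [sub_nonneg, div_le_one hkR]; exact_mod_cast hk
  -- per-step decrease
  have key : ∀ i < k, OPT - f (G (i+1)) ≤ (1 - 1/(k:ℝ)) * (OPT - f (G i)) := by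
    intro i hi
    obtain ⟨e, he, hGe, hmax⟩ := hstep i hi
    set g := f (G (i+1)) - f (G i) with hg
    have hg0 : 0 ≤ g := by
      rw [hg, hGe, sub_nonneg]
      exact hmono _ _ (Finset.subset_insert _ _)
    have hterm : ∀ e' ∈ S, f (insert e' (G i)) - f (G i) ≤ g := by
      intro e' _
      by_cases h : e' ∈ G i
      · rw [Finset.insert_eq_self.2 h, sub_self]; exact hg0
      · rw [hg, hGe]; exact hmax e' h
    have hsum : ∑ e' ∈ S, (f (insert e' (G i)) - f (G i)) ≤ (k:ℝ) * g := by
      calc ∑ e' ∈ S, (f (insert e' (G i)) - f (G i)) ≤ ∑ _e' ∈ S, g :=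
            Finset.sum_le_sum hterm
        _ = (k:ℝ) * g := by rw [Finset.sum_const, hScard, nsmul_eq_mul]
    have htel := greedy_telescope f hsub (G i) S
    have hOS : OPT ≤ f (G i ∪ S) := by
      rw [← hfS]; exact hmono _ _ Finset.subset_union_right
    have hkey : OPT - f (G i) ≤ (k:ℝ) * g := by linarith
    have hgk : (OPT - f (G i)) / (k:ℝ) ≤ g := by
      rw [div_le_iff₀ hkR]; linarith [hkey]
    have : OPT - f (G (i+1)) = (OPT - f (G i)) - g := by rw [hg]; ring
    rw [this]
    have : (1 - 1/(k:ℝ)) * (OPT - f (G i)) = (OPT - f (G i)) - (OPT - f (G i)) / (k:ℝ) := by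
      field_simp
    rw [this]; linarith
  -- induction
  have main : ∀ i ≤ k, OPT - f (G i) ≤ (1 - 1/(k:ℝ))^i * OPT := by
    intro i
    induction i with
    | zero => intro _; simp [hG0, h0]
    | succ i ih =>
      intro hik
      have hik' : i < k := hik
      calc OPT - f (G (i+1)) ≤ (1 - 1/(k:ℝ)) * (OPT - f (G i)) := key i hik'
        _ ≤ (1 - 1/(k:ℝ)) * ((1 - 1/(k:ℝ))^i * OPT) :=
            mul_le_mul_of_nonneg_left (ih hik'.le) hq0
        _ = (1 - 1/(k:ℝ))^(i+1) * OPT := by ring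
  have h1 : f (G k) ≥ (1 - (1 - 1/(k:ℝ))^k) * OPT := by
    have := main k le_rfl
    nlinarith [this]
  refine ⟨h1, ?_⟩
  have hexp : (1 - 1/(k:ℝ))^k ≤ 1 / Real.exp 1 := by
    have h1k : 1 - 1/(k:ℝ) ≤ Real.exp (-(1/(k:ℝ))) := by
      have := Real.add_one_le_exp (-(1/(k:ℝ)))
      linarith
    calc (1 - 1/(k:ℝ))^k ≤ (Real.exp (-(1/(k:ℝ))))^k :=
          pow_le_pow_left₀ hq0 h1k k
      _ = Real.exp ((k:ℝ) * (-(1/(k:ℝ)))) := by rw [← Real.exp_nat_mul]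
      _ = Real.exp (-1) := by
          congr 1; field_simp
      _ = 1 / Real.exp 1 := by rw [Real.exp_neg]; ring
  have : 1 - 1 / Real.exp 1 ≤ 1 - (1 - 1/(k:ℝ))^k := by linarith
  exact mul_le_mul_of_nonneg_right this hOPTnn
end

section
/- Let f : 2^V → ℝ be a monotone submodular function with f(∅) = 0, let OPT_k = max_{|S| = k} f(S), and let G_ℓ be the greedy set after ℓ steps. Then for any ℓ, k ≥ 1, f(G_ℓ) ≥ (1 - e^{-ℓ/k}) · OPT_k. In particular, running greedy for ℓ = 5k steps achieves f(G_{5k}) ≥ (1 - e^{-5}) · OPT_k > 0.99 · OPT_k. -/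
/-- Greedy for `ℓ` steps against the optimum of size `k`:
`f(G_ℓ) ≥ (1 - e^{-ℓ/k}) · OPT_k`. In particular, after `ℓ = 5k` steps,
`f(G_{5k}) ≥ (1 - e^{-5}) · OPT_k`, and `1 - e^{-5} > 0.99`. -/
theorem greedy_extended_guarantee {V : Type*} [Fintype V] [DecidableEq V]
    (f : Finset V → ℝ) (k ℓ : ℕ) (hk : 1 ≤ k) (hℓ : 1 ≤ ℓ)
    (hcard : max ℓ (5 * k) ≤ Fintype.card V)
    (hmono : ∀ A B : Finset V, A ⊆ B → f A ≤ f B)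
    (hsub : ∀ A B : Finset V, A ⊆ B → ∀ e ∉ B,
      f (insert e A) - f A ≥ f (insert e B) - f B)
    (h0 : f ∅ = 0)
    (G : ℕ → Finset V) (hG0 : G 0 = ∅)
    (hstep : ∀ i < max ℓ (5 * k), ∃ e ∉ G i, G (i + 1) = insert e (G i) ∧
      ∀ e' ∉ G i, f (insert e' (G i)) - f (G i) ≤ f (insert e (G i)) - f (G i))
    (OPT : ℝ)
    (hOPT : IsGreatest {x : ℝ | ∃ S : Finset V, S.card = k ∧ f S = x} OPT) :
    f (G ℓ) ≥ (1 - Real.exp (-(ℓ : ℝ) / (k : ℝ))) * OPT ∧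
      f (G (5 * k)) ≥ (1 - Real.exp (-5)) * OPT ∧
      (0.99 : ℝ) < 1 - Real.exp (-5) := by
  obtain ⟨⟨S, hScard, hSf⟩, -⟩ := hOPT
  set N := max ℓ (5 * k) with hN
  have hkpos : (0:ℝ) < k := by exact_mod_cast hk
  have hOPT0 : 0 ≤ OPT := by
    rw [← hSf, ← h0]; exact hmono _ _ (Finset.empty_subset S)
  -- subadditivity of marginals
  have hsum : ∀ (A T : Finset V),
      f (A ∪ T) - f A ≤ ∑ e ∈ T, (f (insert e A) - f A) := by
    intro A T
    induction T using Finset.induction_on with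
    | empty => simp
    | @insert x T hx ih =>
      rw [Finset.sum_insert hx, Finset.union_insert]
      by_cases hxA : x ∈ A ∪ T
      · rw [Finset.insert_eq_self.2 hxA]
        have hx' : x ∈ A := by
          rcases Finset.mem_union.1 hxA with h | h
          · exact h
          · exact absurd h hx
        rw [Finset.insert_eq_self.2 hx']
        linarith
      · have h1 := hsub A (A ∪ T) Finset.subset_union_left x hxA
        linarith
  -- one greedy step
  have hone : ∀ i < N, OPT - f (G (i + 1)) ≤ (1 - 1 / (k:ℝ)) * (OPT - f (G i)) := by
    intro i hi
    obtain ⟨e, he, hG1, hmax⟩ := hstep i hi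
    set δ := f (G (i + 1)) - f (G i) with hδ
    have hδe : δ = f (insert e (G i)) - f (G i) := by rw [hδ, hG1]
    have hδ0 : 0 ≤ δ := by
      rw [hδe]
      have := hmono (G i) (insert e (G i)) (Finset.subset_insert _ _)
      linarith
    have hterm : ∀ e' ∈ S, f (insert e' (G i)) - f (G i) ≤ δ := by
      intro e' _
      by_cases h : e' ∈ G i
      · rw [Finset.insert_eq_self.2 h]; linarith
      · rw [hδe]; exact hmax e' h
    have hsum' : ∑ e' ∈ S, (f (insert e' (G i)) - f (G i)) ≤ (k:ℝ) * δ := by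
      calc ∑ e' ∈ S, (f (insert e' (G i)) - f (G i))
          ≤ ∑ _e' ∈ S, δ := Finset.sum_le_sum hterm
        _ = (k:ℝ) * δ := by rw [Finset.sum_const, hScard, nsmul_eq_mul]
    have hOPTle : OPT ≤ f (G i ∪ S) := by
      rw [← hSf]; exact hmono _ _ Finset.subset_union_right
    have hkey : OPT - f (G i) ≤ (k:ℝ) * δ := by
      have := hsum (G i) S
      linarith
    have hdiv : (OPT - f (G i)) / (k:ℝ) ≤ δ := by
      rw [div_le_iff₀ hkpos]; nlinarith
    have : (1 - 1 / (k:ℝ)) * (OPT - f (G i)) = (OPT - f (G i)) - (OPT - f (G i)) / k := by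
      ring
    linarith
  have h1k0 : (0:ℝ) ≤ 1 - 1 / (k:ℝ) := by
    have : 1 / (k:ℝ) ≤ 1 := by
      rw [div_le_one hkpos]; exact_mod_cast hk
    linarith
  -- iterate
  have hiter : ∀ t, t ≤ N → OPT - f (G t) ≤ (1 - 1 / (k:ℝ)) ^ t * OPT := by
    intro t
    induction t with
    | zero => intro _; simp [hG0, h0]
    | succ t ih =>
      intro ht
      have ht' : t ≤ N := Nat.le_of_succ_le ht
      have h1 := hone t (Nat.lt_of_succ_le ht)
      have h2 := ih ht'
      calc OPT - f (G (t + 1)) ≤ (1 - 1 / (k:ℝ)) * (OPT - f (G t)) := h1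
        _ ≤ (1 - 1 / (k:ℝ)) * ((1 - 1 / (k:ℝ)) ^ t * OPT) :=
            mul_le_mul_of_nonneg_left h2 h1k0
        _ = (1 - 1 / (k:ℝ)) ^ (t + 1) * OPT := by ring
  -- compare with exponential
  have hexp1 : (1 - 1 / (k:ℝ)) ≤ Real.exp (-(1 / (k:ℝ))) := by
    have := Real.add_one_le_exp (-(1 / (k:ℝ)))
    linarith
  have hmain : ∀ t : ℕ, t ≤ N → f (G t) ≥ (1 - Real.exp (-(t:ℝ) / k)) * OPT := by
    intro t ht
    have hpow : (1 - 1 / (k:ℝ)) ^ t ≤ Real.exp (-(t:ℝ) / k) := by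
      calc (1 - 1 / (k:ℝ)) ^ t ≤ (Real.exp (-(1 / (k:ℝ)))) ^ t :=
            pow_le_pow_left₀ h1k0 hexp1 t
        _ = Real.exp ((t:ℕ) * (-(1 / (k:ℝ)))) := (Real.exp_nat_mul _ t).symm
        _ = Real.exp (-(t:ℝ) / k) := by ring_nf
    have h3 := hiter t ht
    have h4 : (1 - 1 / (k:ℝ)) ^ t * OPT ≤ Real.exp (-(t:ℝ) / k) * OPT :=
      mul_le_mul_of_nonneg_right hpow hOPT0
    linarith
  have hkne : (k:ℝ) ≠ 0 := ne_of_gt hkpos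
  have h5k : (-(((5 * k : ℕ)):ℝ)) / k = -5 := by
    push_cast; field_simp
  refine ⟨hmain ℓ (le_max_left _ _), ?_, ?_⟩
  · have := hmain (5 * k) (le_max_right _ _)
    rwa [h5k] at this
  · have he1 : (2.7182818283 : ℝ) < Real.exp 1 := Real.exp_one_gt_d9
    have h100 : (100:ℝ) < Real.exp 5 := by
      have h5 : Real.exp 5 = (Real.exp 1) ^ (5:ℕ) := by
        rw [← Real.exp_nat_mul]; norm_num
      have : (2.7182818283 : ℝ) ^ (5:ℕ) < (Real.exp 1) ^ (5:ℕ) :=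
        pow_lt_pow_left₀ he1 (by norm_num) (by norm_num)
      rw [h5]
      nlinarith [this]
    have : Real.exp (-5) < 0.01 := by
      rw [Real.exp_neg]
      have h1 : (Real.exp 5)⁻¹ < (100:ℝ)⁻¹ := by
        apply inv_strictAnti₀ (by norm_num) h100
      norm_num at h1 ⊢
      linarith
    linarith
end

section
/- Let f : 2^V → ℝ be monotone submodular with f(∅) = 0 and G_ℓ the greedy set after ℓ steps. Then after each greedy step, the gap to the optimum of size k shrinks by a factor (1 - 1/k): OPT_k - f(G_{i+1}) ≤ (1 - 1/k)(OPT_k - f(G_i)) for every i, where OPT_k = max_{|S| = k} f(S). -/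
lemma greedy_marg_sum {V : Type*} [DecidableEq V] (f : Finset V → ℝ) (Gi : Finset V)
    (hsub : ∀ A B : Finset V, A ⊆ B → ∀ e ∉ B,
      f (insert e A) - f A ≥ f (insert e B) - f B) :
    ∀ T : Finset V, (∀ e ∈ T, e ∉ Gi) →
      f (T ∪ Gi) ≤ f Gi + ∑ x ∈ T, (f (insert x Gi) - f Gi) := by
  intro T
  induction T using Finset.induction with
  | empty => simp
  | @insert a T hx ih =>
    intro h
    have ha : a ∉ T ∪ Gi := by
      simp only [Finset.mem_union, not_or]
      exact ⟨hx, h a (Finset.mem_insert_self a T)⟩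
    have h1 : f (insert a (T ∪ Gi)) - f (T ∪ Gi) ≤ f (insert a Gi) - f Gi :=
      hsub Gi (T ∪ Gi) Finset.subset_union_right a ha
    have h2 := ih (fun e he => h e (Finset.mem_insert_of_mem he))
    rw [Finset.insert_union, Finset.sum_insert hx]
    linarith

/-- Per-step contraction of the greedy gap: after a greedy step at stage `i`,
`OPT_k - f(G_{i+1}) ≤ (1 - 1/k) (OPT_k - f(G_i))`. -/
theorem greedy_gap_contraction {V : Type*} [Fintype V] [DecidableEq V]
    (f : Finset V → ℝ) (k : ℕ) (hk : 1 ≤ k)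
    (hmono : ∀ A B : Finset V, A ⊆ B → f A ≤ f B)
    (hsub : ∀ A B : Finset V, A ⊆ B → ∀ e ∉ B,
      f (insert e A) - f A ≥ f (insert e B) - f B)
    (h0 : f ∅ = 0)
    (G : ℕ → Finset V) (hG0 : G 0 = ∅)
    (OPT : ℝ)
    (hOPT : IsGreatest {x : ℝ | ∃ S : Finset V, S.card = k ∧ f S = x} OPT)
    (i : ℕ) (hi : i < Fintype.card V)
    (hstep : ∃ e ∉ G i, G (i + 1) = insert e (G i) ∧
      ∀ e' ∉ G i, f (insert e' (G i)) - f (G i) ≤ f (insert e (G i)) - f (G i)) :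
    OPT - f (G (i + 1)) ≤ (1 - 1 / (k : ℝ)) * (OPT - f (G i)) := by
  obtain ⟨e, he, heq, hmax⟩ := hstep
  obtain ⟨⟨S, hScard, hSf⟩, -⟩ := hOPT
  set δ : ℝ := f (G (i + 1)) - f (G i) with hδ
  have hδe : δ = f (insert e (G i)) - f (G i) := by rw [hδ, heq]
  have hδ0 : 0 ≤ δ := by
    rw [hδe]
    have := hmono (G i) (insert e (G i)) (Finset.subset_insert _ _)
    linarith
  have hsum := greedy_marg_sum f (G i) hsub (S \ G i)
    (fun x hx => (Finset.mem_sdiff.mp hx).2)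
  have hunion : f S ≤ f ((S \ G i) ∪ G i) :=
    hmono _ _ (by intro x hx; by_cases h : x ∈ G i <;> simp [Finset.mem_sdiff, hx, h])
  have hterm : ∑ x ∈ S \ G i, (f (insert x (G i)) - f (G i)) ≤ ((S \ G i).card : ℝ) * δ := by
    have := Finset.sum_le_card_nsmul (S \ G i)
      (fun x => f (insert x (G i)) - f (G i)) δ
      (fun x hx => by rw [hδe]; exact hmax x (Finset.mem_sdiff.mp hx).2)
    simpa [nsmul_eq_mul] using this
  have hcard : ((S \ G i).card : ℝ) ≤ (k : ℝ) := by
    exact_mod_cast hScard ▸ Finset.card_le_card (Finset.sdiff_subset)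
  have key : OPT - f (G i) ≤ (k : ℝ) * δ := by
    have hc : ((S \ G i).card : ℝ) * δ ≤ (k : ℝ) * δ :=
      mul_le_mul_of_nonneg_right hcard hδ0
    rw [← hSf]; linarith
  have hk0 : (0 : ℝ) < (k : ℝ) := by exact_mod_cast Nat.lt_of_lt_of_le Nat.zero_lt_one hk
  have h2 : (OPT - f (G i)) / (k : ℝ) ≤ δ := (div_le_iff₀ hk0).mpr (by linarith)
  have expand : (1 - 1 / (k : ℝ)) * (OPT - f (G i))
      = (OPT - f (G i)) - (OPT - f (G i)) / (k : ℝ) := by ring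
  rw [expand]
  have hG1 : f (G (i + 1)) = f (G i) + δ := by rw [hδ]; ring
  linarith
end
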